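/- arXiv:math/0210481 — 2 statements merged into one kernel-verified Lean document; each statement's English description precedes it below -/
import Mathlib

section
/- Let M : [0,T] → ℝ be a nonnegative continuous function such that M(t) ≤ a + b·M(t)^θ for all t ∈ [0,T], where a, b > 0 and θ > 1 are constants satisfying a < (1 - 1/θ)·(θb)^(-1/(θ-1)) and M(0) ≤ (θb)^(-1/(θ-1)). Then M(t) ≤ (θ/(θ-1))·a for every t ∈ [0,T]. -/
/-- Bootstrap lemma (Lemma 2.7): if a nonnegative continuous function `M` on `[0,T]`
satisfies `M t ≤ a + b * M t ^ θ` with `a, b > 0`, `θ > 1`,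
`a < (1 - 1/θ) * (θ*b) ^ (-1/(θ-1))` and `M 0 ≤ (θ*b) ^ (-1/(θ-1))`,
then `M t ≤ (θ/(θ-1)) * a` on `[0,T]`. -/
theorem bootstrap_lemma (T a b θ : ℝ) (hT : 0 < T) (ha : 0 < a) (hb : 0 < b)
    (hθ : 1 < θ) (M : ℝ → ℝ)
    (hMcont : ContinuousOn M (Set.Icc 0 T))
    (hMnonneg : ∀ t ∈ Set.Icc (0:ℝ) T, 0 ≤ M t)
    (hM : ∀ t ∈ Set.Icc (0:ℝ) T, M t ≤ a + b * M t ^ θ)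
    (hsmall : a < (1 - 1/θ) * (θ * b) ^ (-(1/(θ-1))))
    (hM0 : M 0 ≤ (θ * b) ^ (-(1/(θ-1)))) :
    ∀ t ∈ Set.Icc (0:ℝ) T, M t ≤ (θ/(θ-1)) * a := by
  set R := (θ * b) ^ (-(1/(θ-1))) with hRdef
  have hθ0 : (0:ℝ) < θ := by linarith
  have hθ1 : (0:ℝ) < θ - 1 := by linarith
  have hθb : (0:ℝ) < θ * b := by positivity
  have hR : 0 < R := Real.rpow_pos_of_pos hθb _
  have hRpow : R ^ (θ - 1) = 1 / (θ * b) := by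
    rw [hRdef, ← Real.rpow_mul (le_of_lt hθb)]
    have : -(1/(θ-1)) * (θ - 1) = -1 := by field_simp
    rw [this, Real.rpow_neg_one, one_div]
  have hkey : ∀ t ∈ Set.Icc (0:ℝ) T, M t ≤ R → M t ≤ (θ/(θ-1)) * a := by
    intro t ht hle
    have hx : 0 ≤ M t := hMnonneg t ht
    rcases eq_or_lt_of_le hx with h0 | h0
    · rw [← h0]; positivity
    · have hpow : M t ^ θ = M t ^ (θ - 1) * M t := by
        rw [← Real.rpow_add_one (ne_of_gt h0) (θ - 1)]
        ring_nf
      have hmono : M t ^ (θ - 1) ≤ R ^ (θ - 1) :=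
        Real.rpow_le_rpow hx hle (le_of_lt hθ1)
      rw [hRpow] at hmono
      have hMt := hM t ht
      rw [hpow] at hMt
      -- b * M t ^(θ-1) * M t ≤ b * (1/(θ*b)) * M t = M t / θ
      have h1 : b * (M t ^ (θ - 1) * M t) ≤ M t / θ := by
        have : b * (M t ^ (θ - 1) * M t) ≤ b * ((1/(θ*b)) * M t) := by
          apply mul_le_mul_of_nonneg_left _ (le_of_lt hb)
          exact mul_le_mul_of_nonneg_right hmono hx
        calc b * (M t ^ (θ - 1) * M t) ≤ b * ((1/(θ*b)) * M t) := this
          _ = M t / θ := by field_simp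
      have h2 : M t ≤ a + M t / θ := by linarith
      rw [div_mul_eq_mul_div, le_div_iff₀ hθ1]
      have h3 : M t * θ ≤ a * θ + M t := by
        have := mul_le_mul_of_nonneg_right h2 (le_of_lt hθ0)
        have hdiv : M t / θ * θ = M t := by field_simp
        nlinarith
      linarith
  have hA : (θ/(θ-1)) * a < R := by
    rw [div_mul_eq_mul_div, div_lt_iff₀ hθ1]
    have h2 : (1 - 1/θ) * θ = θ - 1 := by field_simp
    nlinarith [mul_lt_mul_of_pos_right hsmall hθ0]
  have hMR : ∀ t ∈ Set.Icc (0:ℝ) T, M t ≤ R := by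
    by_contra h
    push_neg at h
    obtain ⟨t, ht, hgt⟩ := h
    have h0T : (0:ℝ) ∈ Set.Icc (0:ℝ) T := ⟨le_refl 0, le_of_lt hT⟩
    have hM0' : M 0 < R := lt_of_le_of_lt (hkey 0 h0T hM0) hA
    have hsub : Set.Icc (0:ℝ) t ⊆ Set.Icc 0 T := Set.Icc_subset_Icc le_rfl ht.2
    have hiv := intermediate_value_Icc ht.1 (hMcont.mono hsub)
    have hRmem : R ∈ M '' Set.Icc 0 t := hiv ⟨le_of_lt hM0', le_of_lt hgt⟩
    obtain ⟨s, hs, hMs⟩ := hRmem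
    have := hkey s (hsub hs) (le_of_eq hMs)
    rw [hMs] at this
    linarith
  intro t ht
  exact hkey t ht (hMR t ht)
end

section
/- Let n ≥ 1, r ≥ 2 with r < 2n/(n−2) if n ≥ 3, set δ(r) = n(1/2 − 1/r), and let c_r be a constant such that the Gagliardo–Nirenberg inequality ‖f‖_{L^r} ≤ c_r ‖f‖_{L^2}^{1−δ(r)} ‖∇f‖_{L^2}^{δ(r)} holds for all f ∈ H¹(ℝⁿ). Then for every f ∈ Σ = {f ∈ H¹ : |x|f ∈ L²}, every ω > 0 and every t ∈ ℝ, one has ‖f‖_{L^r} ≤ (c_r/(cosh(ωt))^{δ(r)}) ‖f‖_{L^2}^{1−δ(r)} ‖J(t)f‖_{L^2}^{δ(r)}, where J(t)f = ω x sinh(ωt) f + i cosh(ωt)∇f. -/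
open MeasureTheory Complex

/-- The gradient of `f`, as an `EuclideanSpace ℂ (Fin n)`-valued function. -/
noncomputable def gradC (n : ℕ) (f : EuclideanSpace ℝ (Fin n) → ℂ)
    (x : EuclideanSpace ℝ (Fin n)) : EuclideanSpace ℂ (Fin n) :=
  WithLp.toLp 2 (fun j => fderiv ℝ f x (EuclideanSpace.single j 1))

/-- `J(t)f = ω x sinh(ωt) f + i cosh(ωt) ∇f`, as an
`EuclideanSpace ℂ (Fin n)`-valued function. -/
noncomputable def JopV (n : ℕ) (ω t : ℝ) (f : EuclideanSpace ℝ (Fin n) → ℂ)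
    (x : EuclideanSpace ℝ (Fin n)) : EuclideanSpace ℂ (Fin n) :=
  WithLp.toLp 2 (fun j => (ω * Real.sinh (ω * t) * x j : ℝ) * f x
    + I * (Real.cosh (ω * t) : ℝ) * fderiv ℝ f x (EuclideanSpace.single j 1))

section aux
variable {n : ℕ} {β : ℝ} {f : EuclideanSpace ℝ (Fin n) → ℂ}

noncomputable def phase (n : ℕ) (β : ℝ) (y : EuclideanSpace ℝ (Fin n)) : ℂ :=
  Complex.exp (-((((β/2) * ‖y‖^2 : ℝ)) : ℂ) * I)

lemma norm_phase (n : ℕ) (β : ℝ) (y : EuclideanSpace ℝ (Fin n)) : ‖phase n β y‖ = 1 := by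
  rw [phase, Complex.norm_exp]
  have : (-((((β/2) * ‖y‖^2 : ℝ)) : ℂ) * I).re = 0 := by
    simp [neg_mul, Complex.mul_I_re]
    exact Or.inr (by simp [← Complex.ofReal_pow])
  rw [this, Real.exp_zero]

lemma hasFDerivAt_phase_mul (hf : Differentiable ℝ f) (x : EuclideanSpace ℝ (Fin n)) :
    HasFDerivAt (fun y => phase n β y * f y)
      (phase n β x • fderiv ℝ f x +
        f x • (phase n β x •
          (-(I • Complex.ofRealCLM.comp ((β/2 : ℝ) • (2 • (innerSL ℝ x))))))) x := by
  have h1 := (hasStrictFDerivAt_norm_sq x).hasFDerivAt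
  have h2 := h1.const_mul (β/2)
  have h3 := Complex.ofRealCLM.hasFDerivAt.comp x h2
  have h4 := (h3.mul_const I).neg
  have h5 := h4.cexp
  have h6 := h5.mul (hf x).hasFDerivAt
  simpa only [phase, Function.comp, Complex.ofRealCLM_apply, neg_mul, Pi.neg_apply, Pi.mul_def] using h6

lemma gradC_phase_mul (hf : Differentiable ℝ f) (x : EuclideanSpace ℝ (Fin n)) (j : Fin n) :
    gradC n (fun y => phase n β y * f y) x j
      = phase n β x * (fderiv ℝ f x (EuclideanSpace.single j 1)
          - I * (β * x j : ℝ) * f x) := by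
  rw [gradC, (hasFDerivAt_phase_mul hf x).fderiv]
  have h : (innerSL ℝ x) (EuclideanSpace.single j 1) = x j := by
    simp [innerSL_apply_apply, EuclideanSpace.inner_single_right]
  simp only [ContinuousLinearMap.add_apply, ContinuousLinearMap.smul_apply,
    ContinuousLinearMap.neg_apply, ContinuousLinearMap.comp_apply, h,
    Complex.ofRealCLM_apply, smul_eq_mul, PiLp.toLp_apply]
  push_cast
  ring

end aux

/-- Modified Gagliardo–Nirenberg inequality (2.7), first line: if the usual
Gagliardo–Nirenberg inequality holds with constant `c_r`, then for `f ∈ Σ`,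
`‖f‖_{L^r} ≤ c_r cosh(ωt)^{-δ(r)} ‖f‖_{L²}^{1-δ(r)} ‖J(t)f‖_{L²}^{δ(r)}`. -/
theorem modified_GN_J (n : ℕ) (hn : 1 ≤ n) (r : ℝ) (hr : 2 ≤ r)
    (hrn : 3 ≤ n → r < 2 * n / ((n : ℝ) - 2))
    (δ : ℝ) (hδ : δ = (n : ℝ) * (1/2 - 1/r)) (c : ℝ) (hc : 0 < c)
    (hGN : ∀ g : EuclideanSpace ℝ (Fin n) → ℂ, Differentiable ℝ g →
        MemLp g 2 volume → MemLp (gradC n g) 2 volume →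
        (eLpNorm g (ENNReal.ofReal r) volume).toReal
          ≤ c * (eLpNorm g 2 volume).toReal ^ (1 - δ)
              * (eLpNorm (gradC n g) 2 volume).toReal ^ δ)
    (ω t : ℝ) (hω : 0 < ω)
    (f : EuclideanSpace ℝ (Fin n) → ℂ) (hf : Differentiable ℝ f)
    (hf2 : MemLp f 2 volume)
    (hfgrad : MemLp (gradC n f) 2 volume)
    (hfx : MemLp (fun x : EuclideanSpace ℝ (Fin n) => ‖x‖ * ‖f x‖) 2 volume) :
    (eLpNorm f (ENNReal.ofReal r) volume).toReal
      ≤ c / Real.cosh (ω * t) ^ δ * (eLpNorm f 2 volume).toReal ^ (1 - δ)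
          * (eLpNorm (JopV n ω t f) 2 volume).toReal ^ δ := by
  set ch : ℝ := Real.cosh (ω * t) with hch_def
  set sh : ℝ := Real.sinh (ω * t) with hsh_def
  have hch : 0 < ch := Real.cosh_pos (ω * t)
  set β : ℝ := ω * Real.tanh (ω * t) with hβ_def
  have hchβ : ch * β = ω * sh := by
    rw [hβ_def, Real.tanh_eq_sinh_div_cosh, ← hsh_def, ← hch_def]
    field_simp
  set g : EuclideanSpace ℝ (Fin n) → ℂ := fun y => phase n β y * f y with hg_def
  have hg_diff : Differentiable ℝ g :=
    fun x => (hasFDerivAt_phase_mul (β := β) hf x).differentiableAt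
  set a : EuclideanSpace ℝ (Fin n) → ℂ :=
    fun x => I * (ch : ℂ) * Complex.exp ((((β/2) * ‖x‖^2 : ℝ) : ℂ) * I) with ha_def
  have hphase_inv : ∀ x, Complex.exp ((((β/2) * ‖x‖^2 : ℝ) : ℂ) * I) * phase n β x = 1 := by
    intro x
    rw [phase, neg_mul, ← Complex.exp_add, add_neg_cancel, Complex.exp_zero]
  have hcβc : (ch : ℂ) * (β : ℂ) = (ω : ℂ) * (sh : ℂ) := by exact_mod_cast hchβ
  have key : ∀ x, JopV n ω t f x = a x • gradC n g x := by
    intro x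
    ext j
    have h1 := hphase_inv x
    have hg1 := gradC_phase_mul (β := β) hf x j
    show JopV n ω t f x j = a x * gradC n g x j
    rw [hg_def, hg1, JopV, ha_def, ← hch_def, ← hsh_def]
    simp only [PiLp.toLp_apply]
    set Ex : ℂ := Complex.exp ((((β/2) * ‖x‖^2 : ℝ) : ℂ) * I) with hEx_def
    push_cast
    linear_combination
      (-(I * (ch : ℂ) * fderiv ℝ f x (EuclideanSpace.single j 1))
        + I^2 * (ch : ℂ) * (β : ℂ) * (x j : ℂ) * f x) * h1
      + ((ch : ℂ) * (β : ℂ) * (x j : ℂ) * f x) * Complex.I_sq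
      - ((x j : ℂ) * f x) * hcβc
  have hnorm_a : ∀ x, ‖a x‖ = ch := by
    intro x
    rw [ha_def]
    simp only []
    rw [norm_mul, norm_mul, Complex.norm_I, one_mul, Complex.norm_real,
      Real.norm_of_nonneg hch.le, Complex.norm_exp_ofReal_mul_I, mul_one]
  have normJ : ∀ x, ‖JopV n ω t f x‖ = ch * ‖gradC n g x‖ := by
    intro x
    rw [key x, norm_smul, hnorm_a]
  set F : EuclideanSpace ℝ (Fin n) → EuclideanSpace ℂ (Fin n) :=
    fun x => WithLp.toLp 2 (fun j => (x j : ℂ) * f x) with hF_def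
  have hF_norm : ∀ x, ‖F x‖ = ‖x‖ * ‖f x‖ := by
    intro x
    rw [hF_def, EuclideanSpace.norm_eq, EuclideanSpace.norm_eq]
    simp_rw [norm_mul, Complex.norm_real, mul_pow, ← Finset.sum_mul]
    rw [Real.sqrt_mul (by positivity), Real.sqrt_sq (norm_nonneg _)]
  have hF_cont : Continuous F := by
    rw [hF_def]
    have hfc := hf.continuous
    fun_prop
  have hF2 : MemLp F 2 volume :=
    hfx.of_le hF_cont.aestronglyMeasurable (ae_of_all _ fun x => by
      rw [hF_norm x, Real.norm_of_nonneg (by positivity)])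
  have hJeq : JopV n ω t f
      = (((ω * sh : ℝ) : ℂ) • F) + ((I * (ch : ℂ)) • gradC n f) := by
    funext x
    ext j
    simp only [JopV, Pi.add_apply, Pi.smul_apply, PiLp.add_apply, PiLp.smul_apply, hF_def,
      gradC, smul_eq_mul, ← hch_def, ← hsh_def, PiLp.toLp_apply]
    push_cast
    ring
  have hJ2 : MemLp (JopV n ω t f) 2 volume := by
    rw [hJeq]
    exact (hF2.const_smul _).add (hfgrad.const_smul _)
  have hgnorm : ∀ x, ‖g x‖ = ‖f x‖ := by
    intro x
    show ‖phase n β x * f x‖ = ‖f x‖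
    rw [norm_mul, norm_phase, one_mul]
  have hg2 : MemLp g 2 volume :=
    hf2.of_le (hg_diff.continuous.aestronglyMeasurable)
      (ae_of_all _ fun x => le_of_eq (hgnorm x))
  have ha_ne : ∀ x, a x ≠ 0 := by
    intro x
    show I * (ch : ℂ) * Complex.exp ((((β/2) * ‖x‖^2 : ℝ) : ℂ) * I) ≠ 0
    exact mul_ne_zero (mul_ne_zero Complex.I_ne_zero (by exact_mod_cast hch.ne'))
      (Complex.exp_ne_zero _)
  have hgradg_eq : gradC n g = fun x => (a x)⁻¹ • JopV n ω t f x := by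
    funext x
    rw [key x, smul_smul, inv_mul_cancel₀ (ha_ne x), one_smul]
  have ha_cont : Continuous a := by
    rw [ha_def]
    fun_prop
  have hgradg_meas : AEStronglyMeasurable (gradC n g) volume := by
    rw [hgradg_eq]
    exact ((ha_cont.inv₀ ha_ne).aestronglyMeasurable).smul hJ2.1
  have hgradg2 : MemLp (gradC n g) 2 volume := by
    refine MemLp.of_le (hJ2.const_smul (ch⁻¹ : ℝ)) hgradg_meas (ae_of_all _ fun x => ?_)
    show ‖gradC n g x‖ ≤ ‖(ch⁻¹ : ℝ) • JopV n ω t f x‖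
    rw [norm_smul, Real.norm_of_nonneg (inv_nonneg.2 hch.le), normJ x, ← mul_assoc,
      inv_mul_cancel₀ hch.ne', one_mul]
  have hgp : ∀ p : ENNReal, eLpNorm g p volume = eLpNorm f p volume := fun p =>
    eLpNorm_congr_norm_ae (ae_of_all _ fun x => hgnorm x)
  have hJg : eLpNorm (JopV n ω t f) 2 volume = ‖ch‖₊ * eLpNorm (gradC n g) 2 volume := by
    rw [show eLpNorm (JopV n ω t f) 2 volume = eLpNorm ((ch : ℝ) • gradC n g) 2 volume from
      eLpNorm_congr_norm_ae (ae_of_all _ fun x => by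
        rw [normJ x, Pi.smul_apply, norm_smul, Real.norm_of_nonneg hch.le])]
    exact eLpNorm_const_smul _ _ _ _
  have htr : (eLpNorm (JopV n ω t f) 2 volume).toReal
      = ch * (eLpNorm (gradC n g) 2 volume).toReal := by
    rw [hJg, ENNReal.toReal_mul, ENNReal.coe_toReal, coe_nnnorm, Real.norm_of_nonneg hch.le]
  have hAt : (eLpNorm (gradC n g) 2 volume).toReal
      = (eLpNorm (JopV n ω t f) 2 volume).toReal / ch := by
    rw [eq_div_iff hch.ne', htr]; ring
  have hmain := hGN g hg_diff hg2 hgradg2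
  rw [hgp (ENNReal.ofReal r), hgp 2, hAt] at hmain
  refine hmain.trans_eq ?_
  rw [Real.div_rpow ENNReal.toReal_nonneg hch.le]
  ring
end
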